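/- Let p be a prime number and let A be any associative (possibly noncommutative) ring. For all a, b ∈ A, the element (a + b)^p − a^p − b^p lies in the additive subgroup pA + [A,A] of A generated by all elements pc with c ∈ A together with all commutators xy − yx with x, y ∈ A. -/

import Mathlib

/-- The additive subgroup `p·A + [A,A]` of a ring `A` generated by all `p • c` together
with all commutators `x*y - y*x`. -/
def pCommutatorAddSubgroup (p : ℕ) (A : Type*) [Ring A] : AddSubgroup A :=
  AddSubgroup.closure ({x : A | ∃ c : A, x = p • c} ∪ {z : A | ∃ x y : A, z = x * y - y * x})

/-!
Expanding `(a + b) ^ p` without commuting anything gives the sum of all words of length `p` in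
`a` and `b`. Modulo `[A, A]` a word may be rotated cyclically, so in `A ⧸ (pA + [A, A])` the terms
are constant on the orbits of `ℤ/p` acting on words by rotation. Orbits of a `p`-group have
`p`-power size and `p` kills the quotient, so only the fixed points survive: the constant words
`a ^ p` and `b ^ p`.
-/

open Finset MulAction

theorem IsPGroup.sum_eq_sum_fixedPoints {p : ℕ} [Fact p.Prime] {G X M : Type*} [Group G]
    [MulAction G X] [Fintype X] [DecidablePred (· ∈ fixedPoints G X)] [AddCommGroup M]
    (hG : IsPGroup p G) (hM : ∀ m : M, p • m = 0) {F : X → M}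
    (hF : ∀ (g : G) x, F (g • x) = F x) :
    ∑ x, F x = ∑ x with x ∈ fixedPoints G X, F x := by
  classical
  have := Fintype.ofFinite (orbitRel.Quotient G X)
  let q : X → orbitRel.Quotient G X := Quotient.mk''
  have fiber (x₀ : X) : ({x | q x = q x₀} : Finset X) = (orbit G x₀).toFinset := by
    ext; simp [q, Quotient.eq'', orbitRel_apply]
  rw [sum_filter, ← sum_fiberwise univ q, ← sum_fiberwise univ q]
  refine Fintype.sum_congr _ _ fun ω => ?_
  induction ω using Quotient.inductionOn' with | h x₀ => ?_
  change ∑ x with q x = q x₀, _ = ∑ x with q x = q x₀, _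
  simp only [fiber]
  by_cases hx₀ : x₀ ∈ fixedPoints G X
  · refine sum_congr rfl fun x hx => ?_
    obtain ⟨g, rfl⟩ := Set.mem_toFinset.1 hx
    simp only [show g • x₀ = x₀ from hx₀ g, if_pos hx₀]
  · have not_fixed : ∀ x ∈ orbit G x₀, x ∉ fixedPoints G X := by
      rintro _ ⟨g, rfl⟩ hfix
      have hg : x₀ = g • x₀ := by simpa using hfix g⁻¹
      exact hx₀ (hg ▸ hfix)
    obtain ⟨k, hk⟩ := hG.card_orbit x₀
    have hk0 : k ≠ 0 := by
      rintro rfl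
      rw [Nat.card_eq_fintype_card, pow_zero, ← mem_fixedPoints_iff_card_orbit_eq_one] at hk
      exact hx₀ hk
    calc ∑ x ∈ (orbit G x₀).toFinset, F x
        = Nat.card (orbit G x₀) • F x₀ := by
          rw [Nat.card_eq_card_toFinset, ← sum_const]
          refine sum_congr rfl fun x hx => ?_
          obtain ⟨g, rfl⟩ := Set.mem_toFinset.1 hx
          exact hF g x₀
      _ = 0 := by
          rw [hk, ← Nat.succ_pred_eq_of_ne_zero hk0, pow_succ, mul_nsmul, hM]
      _ = _ := (sum_eq_zero fun x hx => if_neg (not_fixed x (Set.mem_toFinset.1 hx))).symm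

theorem sum_pow_eq_sum_prod_ofFn {A ι : Type*} [Semiring A] [Fintype ι] (x : ι → A) (n : ℕ) :
    (∑ i, x i) ^ n = ∑ w : Fin n → ι, (List.ofFn fun k => x (w k)).prod := by
  induction n with
  | zero => simp
  | succ n ih =>
    rw [pow_succ', ih, sum_mul_sum, ← Fintype.sum_prod_type',
      ← (Fin.consEquiv fun _ => ι).sum_comp]
    refine Fintype.sum_congr _ _ fun ⟨i, w⟩ => ?_
    simp [List.ofFn_succ]

/-- Not a global instance: it would clash with the pointwise action `Pi.mulAction`. -/
abbrev Fin.rotateAction (n : ℕ) [NeZero n] (α : Type*) :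
    MulAction (Multiplicative (Fin n)) (Fin n → α) where
  smul k w i := w (i + k.toAdd)
  one_smul w := funext fun i => congrArg w (add_zero i)
  mul_smul _ _ w := funext fun i => congrArg w (add_assoc i _ _).symm

attribute [local instance] Fin.rotateAction

section RotateAction

variable {n : ℕ} [NeZero n] {α : Type*}

theorem Fin.rotateAction_smul_apply (k : Multiplicative (Fin n)) (w : Fin n → α) (i : Fin n) :
    (k • w) i = w (i + k.toAdd) :=
  rfl

theorem List.ofFn_rotateAction_smul (k : Multiplicative (Fin n)) (w : Fin n → α) :
    List.ofFn (k • w) = (List.ofFn w).rotate k.toAdd.val := by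
  refine List.ext_getElem (by simp) fun j _ _ => ?_
  simp [List.getElem_rotate, Fin.rotateAction_smul_apply, Fin.add_def]

theorem Fin.mem_fixedPoints_rotateAction {w : Fin n → α} :
    w ∈ fixedPoints (Multiplicative (Fin n)) (Fin n → α) ↔ w ∈ Set.range (Function.const _) := by
  constructor
  · intro hw
    refine ⟨w 0, funext fun i => Eq.symm ?_⟩
    simpa [Fin.rotateAction_smul_apply] using congrFun (hw (.ofAdd i)) 0
  · rintro ⟨c, rfl⟩ _
    rfl

end RotateAction

namespace pCommutatorAddSubgroup

variable {p : ℕ} {A : Type*} [Ring A]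

theorem nsmul_mem (c : A) : p • c ∈ pCommutatorAddSubgroup p A :=
  AddSubgroup.subset_closure (Or.inl ⟨c, rfl⟩)

theorem mul_sub_mul_mem (x y : A) : x * y - y * x ∈ pCommutatorAddSubgroup p A :=
  AddSubgroup.subset_closure (Or.inr ⟨x, y, rfl⟩)

theorem nsmul_eq_zero (q : A ⧸ pCommutatorAddSubgroup p A) : p • q = 0 := by
  induction q using QuotientAddGroup.induction_on with
  | H c => exact (QuotientAddGroup.eq_zero_iff _).2 (nsmul_mem c)

theorem mk_mul_comm (x y : A) :
    ((x * y : A) : A ⧸ pCommutatorAddSubgroup p A) = (y * x : A) :=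
  QuotientAddGroup.eq_iff_sub_mem.2 (mul_sub_mul_mem x y)

theorem mk_prod_rotate (l : List A) (n : ℕ) :
    ((l.rotate n).prod : A ⧸ pCommutatorAddSubgroup p A) = l.prod := by
  rw [List.rotate_eq_drop_append_take_mod, List.prod_append, mk_mul_comm, ← List.prod_append,
    List.take_append_drop]

theorem mk_sum_pow (hp : p.Prime) {ι : Type*} [Fintype ι] (x : ι → A) :
    (((∑ i, x i) ^ p : A) : A ⧸ pCommutatorAddSubgroup p A) = ∑ i, ((x i ^ p : A) : A ⧸ _) := by
  classical
  have := Fact.mk hp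
  have := NeZero.mk hp.ne_zero
  have hG : IsPGroup p (Multiplicative (Fin p)) := IsPGroup.of_card (n := 1) (by simp)
  have fixed_eq : ({w | w ∈ fixedPoints (Multiplicative (Fin p)) (Fin p → ι)} : Finset _) =
      univ.map ⟨Function.const _, Function.const_injective⟩ := by
    ext w
    rw [mem_filter, Fin.mem_fixedPoints_rotateAction]
    simp
  rw [sum_pow_eq_sum_prod_ofFn, QuotientAddGroup.mk_sum,
    hG.sum_eq_sum_fixedPoints nsmul_eq_zero fun k w => ?_, fixed_eq, sum_map]
  · simp [List.ofFn_const, List.prod_replicate]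
  · change (((List.ofFn (k • fun j => x (w j))).prod : A) : A ⧸ pCommutatorAddSubgroup p A) = _
    rw [List.ofFn_rotateAction_smul, mk_prod_rotate]

theorem sum_pow_sub_sum_pow_mem (hp : p.Prime) {ι : Type*} [Fintype ι] (x : ι → A) :
    (∑ i, x i) ^ p - ∑ i, x i ^ p ∈ pCommutatorAddSubgroup p A := by
  rw [← QuotientAddGroup.eq_iff_sub_mem, QuotientAddGroup.mk_sum]
  exact mk_sum_pow hp x

end pCommutatorAddSubgroup

theorem stmt_6 (p : ℕ) (hp : p.Prime) (A : Type*) [Ring A] (a b : A) :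
    (a + b) ^ p - a ^ p - b ^ p ∈ pCommutatorAddSubgroup p A := by
  simpa [sub_sub] using pCommutatorAddSubgroup.sum_pow_sub_sum_pow_mem hp fun c => cond c a b
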